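/- Let G be a graph, c a proper k-colouring of G, and u ≠ v vertices of G. Let c_u be a colouring obtained from c by a trivial Kempe swap at u (recolouring only u), and c_v obtained from c by a trivial Kempe swap at v. Then c_u and c_v are not adjacent in the k-Kempe-recolouring graph K_k(G); i.e., one cannot move from c_u to c_v by a single Kempe swap. -/

import Mathlib

/-- A proper `k`-colouring of `G`: adjacent vertices receive distinct colours. -/
def ProperColoring {V : Type*} (G : SimpleGraph V) {k : ℕ} (c : V → Fin k) : Prop :=
  ∀ ⦃x y : V⦄, G.Adj x y → c x ≠ c y

/-- The subgraph of `G` induced by the vertices coloured `a` or `b` under `c`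
(as a graph on all of `V`). -/
def kempeGraph {V : Type*} (G : SimpleGraph V) {k : ℕ} (c : V → Fin k) (a b : Fin k) :
    SimpleGraph V where
  Adj x y := G.Adj x y ∧ (c x = a ∨ c x = b) ∧ (c y = a ∨ c y = b)
  symm := ⟨fun x y ⟨h, hx, hy⟩ => ⟨h.symm, hy, hx⟩⟩
  loopless := ⟨fun x ⟨h, _, _⟩ => G.irrefl h⟩

open Classical in
/-- The colouring obtained from `c` by the Kempe swap exchanging colours `a` and `b`
on the connected component of `v` in the subgraph induced by colours `a` and `b`. -/
noncomputable def kempeSwap {V : Type*} (G : SimpleGraph V) {k : ℕ}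
    (c : V → Fin k) (a b : Fin k) (v : V) : V → Fin k :=
  fun x => if (kempeGraph G c a b).Reachable v x
    then (if c x = a then b else if c x = b then a else c x)
    else c x

/-- `d` is obtained from `c` by a single Kempe swap that actually changes the
colouring: adjacency in the Kempe-recolouring graph. -/
def KempeStep {V : Type*} (G : SimpleGraph V) {k : ℕ} (c d : V → Fin k) : Prop :=
  c ≠ d ∧ ∃ (a b : Fin k) (v : V), d = kempeSwap G c a b v


/-!
If `c_v` arises from `c_u` by a Kempe swap on colours `a, b`, that swap changes exactly the two
vertices `u` and `v`. Every other vertex of the swapped component keeps its colour, so it is not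
coloured `a` or `b` and has no edge in the `a`/`b`-subgraph; hence the first step of a path from
`u` to `v` in that subgraph goes straight to `v`, i.e. `u` and `v` are adjacent. The swap then
exchanges their colours, giving `c u = c_v u = c_u v = c v` on the edge `uv`, contradicting that
`c` is proper.
-/

section KempeSwap

variable {V : Type*} {G : SimpleGraph V} {k : ℕ} {c : V → Fin k} {a b : Fin k} {u v v₀ x y : V}

theorem kempeSwap_apply_ne_iff :
    kempeSwap G c a b v₀ x ≠ c x ↔
      (kempeGraph G c a b).Reachable v₀ x ∧ (c x = a ∨ c x = b) ∧ a ≠ b := by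
  unfold kempeSwap
  by_cases hr : (kempeGraph G c a b).Reachable v₀ x
  · simp only [if_pos hr]
    split_ifs with ha hb
    · simp [hr, ha, eq_comm]
    · simp [hr, hb]
    · simp [ha, hb]
  · simp [hr]

theorem kempeSwap_apply_eq_of_ne (hr : (kempeGraph G c a b).Reachable v₀ x)
    (hx : c x = a ∨ c x = b) (hy : c y = a ∨ c y = b) (hxy : c x ≠ c y) :
    kempeSwap G c a b v₀ x = c y := by
  simp only [kempeSwap, if_pos hr]
  rcases hx with hxa | hxb <;> rcases hy with hya | hyb <;> simp_all

theorem kempeGraph_adj_of_kempeSwap_ne (huv : u ≠ v)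
    (hu : kempeSwap G c a b v₀ u ≠ c u) (hv : kempeSwap G c a b v₀ v ≠ c v)
    (hfix : ∀ x, x ≠ u → x ≠ v → kempeSwap G c a b v₀ x = c x) :
    (kempeGraph G c a b).Adj u v := by
  obtain ⟨hru, -, hab⟩ := kempeSwap_apply_ne_iff.mp hu
  obtain ⟨hrv, -⟩ := kempeSwap_apply_ne_iff.mp hv
  obtain ⟨p⟩ := hru.symm.trans hrv
  have hstep : (kempeGraph G c a b).Adj u p.snd := p.adj_snd (p.not_nil_of_ne huv)
  suffices p.snd = v from this ▸ hstep
  by_contra hw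
  refine kempeSwap_apply_ne_iff.mpr ⟨hru.trans hstep.reachable, hstep.2.2, hab⟩ ?_
  exact hfix _ hstep.ne.symm hw

end KempeSwap

theorem stmt8_general {V : Type*} (G : SimpleGraph V) (k : ℕ)
    (c : V → Fin k) (hc : ProperColoring G c)
    (u v : V) (huv : u ≠ v)
    (cu : V → Fin k) (hcu : ProperColoring G cu)
    (hdu : c u ≠ cu u ∧ ∀ x ≠ u, c x = cu x)
    (cv : V → Fin k)
    (hdv : c v ≠ cv v ∧ ∀ x ≠ v, c x = cv x) :
    ¬ KempeStep G cu cv := by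
  rintro ⟨-, a, b, v₀, rfl⟩
  obtain ⟨hcu_u, hcu_eq⟩ := hdu
  obtain ⟨hcv_v, hcv_eq⟩ := hdv
  have hu : kempeSwap G cu a b v₀ u ≠ cu u := (hcv_eq u huv).symm ▸ hcu_u
  have hv : kempeSwap G cu a b v₀ v ≠ cu v := (hcu_eq v huv.symm) ▸ hcv_v.symm
  have hfix : ∀ x, x ≠ u → x ≠ v → kempeSwap G cu a b v₀ x = cu x := fun x hxu hxv =>
    (hcv_eq x hxv).symm.trans (hcu_eq x hxu)
  have hadj := kempeGraph_adj_of_kempeSwap_ne huv hu hv hfix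
  obtain ⟨hru, hu_ab, -⟩ := kempeSwap_apply_ne_iff.mp hu
  have hswap : kempeSwap G cu a b v₀ u = cu v :=
    kempeSwap_apply_eq_of_ne hru hu_ab hadj.2.2 (hcu hadj.1)
  exact hc hadj.1 <| (hcv_eq u huv).trans <| hswap.trans (hcu_eq v huv.symm).symm

theorem stmt8 {V : Type*} (G : SimpleGraph V) (k : ℕ)
    (c : V → Fin k) (hc : ProperColoring G c)
    (u v : V) (huv : u ≠ v)
    (cu : V → Fin k) (hcu : ProperColoring G cu)
    (hdu : c u ≠ cu u ∧ ∀ x ≠ u, c x = cu x)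
    (cv : V → Fin k) (hcv : ProperColoring G cv)
    (hdv : c v ≠ cv v ∧ ∀ x ≠ v, c x = cv x) :
    ¬ KempeStep G cu cv :=
  stmt8_general G k c hc u v huv cu hcu hdu cv hdv
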